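/- For every integer n ≥ 2, the total number of odd parts over all partitions with perimeter n equals (n+2)·2^{n−3}, and the total number of even parts over all partitions with perimeter n equals n·2^{n−3}. -/

import Mathlib

/-- A partition: a nonempty weakly decreasing list of positive integers. -/
def IsPartition (l : List ℕ) : Prop :=
  l ≠ [] ∧ l.Pairwise (· ≥ ·) ∧ ∀ x ∈ l, 0 < x

/-- The perimeter of a partition: largest part plus number of parts minus 1. -/
def perim (l : List ℕ) : ℕ := l.headI + l.length - 1

/-- Number of repeated parts: indices i with λ_i = λ_{i+1}. -/
def repStat (l : List ℕ) : ℕ :=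
  ((List.range (l.length - 1)).filter fun i => l.getD i 0 = l.getD (i + 1) 0).length

/-- Number of even parts. -/
def evenStat (l : List ℕ) : ℕ := l.countP fun x => x % 2 = 0

/-!
For `n ≥ 1`, every partition of perimeter `n + 1` arises in exactly one way from a partition
of perimeter `n`: by repeating its largest part, or by enlarging its largest part by one.
Repeating adds a part equal to the largest part; enlarging replaces the largest part `λ₁` by
`λ₁ + 1`. Hence for any predicate `p` the total number `T n` of parts satisfying `p` obeys
`T (n + 1) = 2 * T n + #{λ ∈ H_n | p (λ₁ + 1)}`. When `p` is a parity, the same recursion on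
largest parts shows that `p (λ₁ + 1)` holds for exactly half of the `2 ^ (n - 1)` partitions
once `n ≥ 2`, so `T (n + 1) = 2 * T n + 2 ^ (n - 2)`; start from `T_odd 2 = 2`, `T_even 2 = 1`.
-/

def partitionsOfPerim (n : ℕ) : Set (List ℕ) := {l | IsPartition l ∧ perim l = n}

def consHead (l : List ℕ) : List ℕ := l.headI :: l

def succHead (l : List ℕ) : List ℕ := (l.headI + 1) :: l.tail

theorem isPartition_cons {a : ℕ} {t : List ℕ} :
    IsPartition (a :: t) ↔ 0 < a ∧ (∀ b ∈ t, b ≤ a) ∧ t.Pairwise (· ≥ ·) ∧ ∀ x ∈ t, 0 < x := by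
  simp only [IsPartition, ne_eq, reduceCtorEq, not_false_eq_true, List.pairwise_cons,
    List.mem_cons, forall_eq_or_imp, true_and, ge_iff_le]
  tauto

theorem perim_cons (a : ℕ) (t : List ℕ) : perim (a :: t) = a + t.length := by
  simp [perim]

theorem IsPartition.ne_nil {l : List ℕ} (h : IsPartition l) : l ≠ [] := h.1

theorem partitionsOfPerim_one : partitionsOfPerim 1 = {[1]} := by
  ext l
  constructor
  · rintro ⟨hl, hper⟩
    obtain ⟨a, t, rfl⟩ := List.exists_cons_of_ne_nil hl.ne_nil
    have ha := (isPartition_cons.1 hl).1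
    rw [perim_cons] at hper
    have ht : t = [] := List.eq_nil_of_length_eq_zero (by omega)
    subst ht
    simp only [Set.mem_singleton_iff, List.cons.injEq, and_true]
    omega
  · rintro rfl
    exact ⟨by simp [isPartition_cons], rfl⟩

theorem consHead_mem {n : ℕ} {l : List ℕ} (hl : l ∈ partitionsOfPerim n) :
    consHead l ∈ partitionsOfPerim (n + 1) := by
  obtain ⟨hl, hper⟩ := hl
  obtain ⟨a, t, rfl⟩ := List.exists_cons_of_ne_nil hl.ne_nil
  obtain ⟨ha, hle, -⟩ := isPartition_cons.1 hl
  refine ⟨isPartition_cons.2 ⟨ha, List.forall_mem_cons.2 ⟨le_rfl, hle⟩, hl.2⟩, ?_⟩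
  simp only [consHead, List.headI_cons, perim_cons, List.length_cons] at hper ⊢
  omega

theorem succHead_mem {n : ℕ} {l : List ℕ} (hl : l ∈ partitionsOfPerim n) :
    succHead l ∈ partitionsOfPerim (n + 1) := by
  obtain ⟨hl, hper⟩ := hl
  obtain ⟨a, t, rfl⟩ := List.exists_cons_of_ne_nil hl.ne_nil
  obtain ⟨-, hle, ht⟩ := isPartition_cons.1 hl
  refine ⟨isPartition_cons.2 ⟨a.succ_pos, fun b hb => (hle b hb).trans a.le_succ, ht⟩, ?_⟩
  simp only [succHead, List.headI_cons, List.tail_cons, perim_cons] at hper ⊢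
  omega

theorem partitionsOfPerim_succ {n : ℕ} (hn : 1 ≤ n) :
    partitionsOfPerim (n + 1) =
      consHead '' partitionsOfPerim n ∪ succHead '' partitionsOfPerim n := by
  refine Set.Subset.antisymm ?_ (Set.union_subset ?_ ?_)
  · rintro m ⟨hm, hper⟩
    obtain ⟨a, t, rfl⟩ := List.exists_cons_of_ne_nil hm.ne_nil
    obtain ⟨ha, hle, ht⟩ := isPartition_cons.1 hm
    rw [perim_cons] at hper
    cases t with
    | nil =>
      right
      simp only [List.length_nil] at hper
      refine ⟨[a - 1], ⟨isPartition_cons.2 ⟨by omega, by simp, by simp⟩, ?_⟩, ?_⟩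
      · simp only [perim_cons, List.length_nil]
        omega
      · simp only [succHead, List.headI_cons, List.tail_cons]
        congr 1
        omega
    | cons b s =>
      obtain rfl | hba := eq_or_lt_of_le (hle b (by simp))
      · refine Or.inl ⟨b :: s, ⟨⟨List.cons_ne_nil _ _, ht⟩, ?_⟩, rfl⟩
        simp only [perim_cons, List.length_cons] at hper ⊢
        omega
      · obtain ⟨hb, hsb, -⟩ := isPartition_cons.1 ⟨List.cons_ne_nil _ _, ht⟩
        have hle' : ∀ c ∈ b :: s, c ≤ a - 1 := by
          simp only [List.mem_cons, forall_eq_or_imp]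
          exact ⟨by omega, fun c hc => by have := hsb c hc; omega⟩
        refine Or.inr ⟨(a - 1) :: b :: s, ⟨isPartition_cons.2 ⟨by omega, hle', ht⟩, ?_⟩, ?_⟩
        · simp only [perim_cons, List.length_cons] at hper ⊢
          omega
        · simp only [succHead, List.headI_cons, List.tail_cons]
          congr 1
          omega
  · rintro _ ⟨l, hl, rfl⟩; exact consHead_mem hl
  · rintro _ ⟨l, hl, rfl⟩; exact succHead_mem hl

theorem partitionsOfPerim_zero : partitionsOfPerim 0 = ∅ := by
  refine Set.eq_empty_of_forall_notMem fun l ⟨hl, hper⟩ => ?_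
  obtain ⟨a, t, rfl⟩ := List.exists_cons_of_ne_nil hl.ne_nil
  have := (isPartition_cons.1 hl).1
  rw [perim_cons] at hper
  omega

theorem partitionsOfPerim_finite (n : ℕ) : (partitionsOfPerim n).Finite := by
  induction n with
  | zero => simp [partitionsOfPerim_zero]
  | succ n ih =>
    rcases Nat.eq_zero_or_pos n with rfl | hn
    · simp [partitionsOfPerim_one]
    · rw [partitionsOfPerim_succ hn]
      exact (ih.image _).union (ih.image _)

theorem consHead_injective : Function.Injective consHead :=
  fun _ _ h => (List.cons.inj h).2

theorem succHead_injOn (n : ℕ) : Set.InjOn succHead (partitionsOfPerim n) := by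
  intro l hl m hm h
  obtain ⟨a, t, rfl⟩ := List.exists_cons_of_ne_nil hl.1.ne_nil
  obtain ⟨b, u, rfl⟩ := List.exists_cons_of_ne_nil hm.1.ne_nil
  simp only [succHead, List.headI_cons, List.tail_cons, List.cons.injEq,
    Nat.add_right_cancel_iff] at h ⊢
  exact h

theorem disjoint_image_consHead_succHead (n : ℕ) :
    Disjoint (consHead '' partitionsOfPerim n) (succHead '' partitionsOfPerim n) := by
  rw [Set.disjoint_left]
  rintro _ ⟨l, hl, rfl⟩ ⟨m, hm, h⟩
  obtain ⟨a, t, rfl⟩ := List.exists_cons_of_ne_nil hl.1.ne_nil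
  obtain ⟨b, u, rfl⟩ := List.exists_cons_of_ne_nil hm.1.ne_nil
  simp only [consHead, succHead, List.headI_cons, List.tail_cons, List.cons.injEq] at h
  obtain ⟨rfl, rfl⟩ := h
  have := (isPartition_cons.1 hm.1).2.1 (b + 1) (by simp)
  omega

theorem finsum_partitionsOfPerim_succ {M : Type*} [AddCommMonoid M] (F : List ℕ → M) {n : ℕ}
    (hn : 1 ≤ n) :
    ∑ᶠ l ∈ partitionsOfPerim (n + 1), F l =
      ∑ᶠ l ∈ partitionsOfPerim n, F (consHead l) + ∑ᶠ l ∈ partitionsOfPerim n, F (succHead l) := by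
  have hfin := partitionsOfPerim_finite n
  rw [partitionsOfPerim_succ hn, finsum_mem_union (disjoint_image_consHead_succHead n)
    (hfin.image _) (hfin.image _), finsum_mem_image consHead_injective.injOn,
    finsum_mem_image (succHead_injOn n)]

section Statistics

variable (p : ℕ → Bool)

noncomputable def headCount (n : ℕ) : ℕ := ∑ᶠ l ∈ partitionsOfPerim n, if p l.headI then 1 else 0

noncomputable def partCount (n : ℕ) : ℕ := ∑ᶠ l ∈ partitionsOfPerim n, l.countP p

theorem countP_consHead (l : List ℕ) :
    (consHead l).countP p = l.countP p + if p l.headI then 1 else 0 :=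
  List.countP_cons

theorem countP_succHead_add {l : List ℕ} (hl : l ≠ []) :
    (succHead l).countP p + (if p l.headI then 1 else 0) =
      l.countP p + if p (l.headI + 1) then 1 else 0 := by
  obtain ⟨a, t, rfl⟩ := List.exists_cons_of_ne_nil hl
  simp only [succHead, List.headI_cons, List.tail_cons, List.countP_cons]
  exact Nat.add_right_comm _ _ _

theorem headCount_succ {n : ℕ} (hn : 1 ≤ n) :
    headCount p (n + 1) = headCount p n + headCount (fun x => p (x + 1)) n :=
  finsum_partitionsOfPerim_succ _ hn

theorem partCount_succ {n : ℕ} (hn : 1 ≤ n) :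
    partCount p (n + 1) = 2 * partCount p n + headCount (fun x => p (x + 1)) n := by
  have hfin := partitionsOfPerim_finite n
  have hcons : ∑ᶠ l ∈ partitionsOfPerim n, (consHead l).countP p =
      partCount p n + headCount p n := by
    rw [partCount, headCount, ← finsum_mem_add_distrib hfin]
    exact finsum_mem_congr rfl fun l _ => countP_consHead p l
  have hsucc : ∑ᶠ l ∈ partitionsOfPerim n, (succHead l).countP p + headCount p n =
      partCount p n + headCount (fun x => p (x + 1)) n := by
    rw [partCount, headCount, headCount, ← finsum_mem_add_distrib hfin,
      ← finsum_mem_add_distrib hfin]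
    exact finsum_mem_congr rfl fun l hl => countP_succHead_add p hl.1.ne_nil
  rw [partCount, finsum_partitionsOfPerim_succ _ hn]
  omega

theorem headCount_add_headCount_not (n : ℕ) :
    headCount p n + headCount (fun x => !p x) n = (partitionsOfPerim n).ncard := by
  have hfin := partitionsOfPerim_finite n
  rw [headCount, headCount, ← finsum_mem_add_distrib hfin, ← finsum_one]
  exact finsum_mem_congr rfl fun l _ => by cases p l.headI <;> rfl

theorem ncard_partitionsOfPerim_succ (n : ℕ) : (partitionsOfPerim (n + 1)).ncard = 2 ^ n := by
  induction n with
  | zero => simp [partitionsOfPerim_one]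
  | succ n ih =>
    rw [← finsum_one, finsum_partitionsOfPerim_succ _ n.succ_pos, finsum_one, ih, pow_succ]
    ring

variable {p}

theorem headCount_add_two_of_alternating (hp : ∀ x, p (x + 1) = !p x) (n : ℕ) :
    headCount p (n + 2) = 2 ^ n := by
  rw [headCount_succ p n.succ_pos, funext hp, headCount_add_headCount_not,
    ncard_partitionsOfPerim_succ]

theorem two_mul_partCount_add_two_of_alternating (hp : ∀ x, p (x + 1) = !p x) (m : ℕ) :
    2 * partCount p (m + 2) = (m + 2 * partCount p 2) * 2 ^ m := by
  induction m with
  | zero => simp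
  | succ m ih =>
    have hp' : ∀ x, p (x + 1 + 1) = !p (x + 1) := fun x => hp (x + 1)
    calc 2 * partCount p (m + 1 + 2)
        = 2 * (2 * partCount p (m + 2)) + 2 * 2 ^ m := by
          rw [partCount_succ p (by omega), headCount_add_two_of_alternating hp']
          ring
      _ = (m + 1 + 2 * partCount p 2) * 2 ^ (m + 1) := by
          rw [ih]
          ring

end Statistics

theorem partCount_two (p : ℕ → Bool) :
    partCount p 2 = 2 * [1].countP p + if p 2 then 1 else 0 := by
  rw [partCount_succ p le_rfl, partCount, headCount, partitionsOfPerim_one,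
    finsum_mem_singleton, finsum_mem_singleton]
  rfl

theorem decide_add_one_mod_two_eq_one (x : ℕ) :
    decide ((x + 1) % 2 = 1) = !decide (x % 2 = 1) := by
  rcases Nat.mod_two_eq_zero_or_one x with h | h <;> simp [h, Nat.add_mod]

theorem decide_add_one_mod_two_eq_zero (x : ℕ) :
    decide ((x + 1) % 2 = 0) = !decide (x % 2 = 0) := by
  rcases Nat.mod_two_eq_zero_or_one x with h | h <;> simp [h, Nat.add_mod]

theorem cast_partCount (p : ℕ → Bool) (n : ℕ) :
    (partCount p n : ℚ) = ∑ᶠ l ∈ partitionsOfPerim n, ((l.countP p : ℕ) : ℚ) :=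
  Nat.cast_finsum_mem (partitionsOfPerim_finite n) _

theorem total_odd_even_parts (n : ℕ) (hn : 2 ≤ n) :
    (∑ᶠ l ∈ {l : List ℕ | IsPartition l ∧ perim l = n},
        ((l.countP fun x => x % 2 = 1 : ℕ) : ℚ)) = (n + 2) * 2 ^ ((n : ℤ) - 3) ∧
    (∑ᶠ l ∈ {l : List ℕ | IsPartition l ∧ perim l = n},
        ((evenStat l : ℕ) : ℚ)) = n * 2 ^ ((n : ℤ) - 3) := by
  obtain ⟨m, rfl⟩ := Nat.exists_eq_add_of_le' hn
  have hpow : (2 : ℚ) ^ (((m + 2 : ℕ) : ℤ) - 3) = 2 ^ m / 2 := by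
    rw [show ((m + 2 : ℕ) : ℤ) - 3 = m - 1 by push_cast; ring, zpow_sub₀ two_ne_zero, zpow_natCast,
      zpow_one]
  have hodd : 2 * partCount (fun x => x % 2 = 1) (m + 2) = (m + 4) * 2 ^ m := by
    simpa [partCount_two] using
      two_mul_partCount_add_two_of_alternating (p := fun x => x % 2 = 1)
        decide_add_one_mod_two_eq_one m
  have heven : 2 * partCount (fun x => x % 2 = 0) (m + 2) = (m + 2) * 2 ^ m := by
    simpa [partCount_two] using
      two_mul_partCount_add_two_of_alternating (p := fun x => x % 2 = 0)
        decide_add_one_mod_two_eq_zero m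
  refine ⟨(cast_partCount _ _).symm.trans ?_, (cast_partCount _ _).symm.trans ?_⟩
  · rw [hpow]
    have := congrArg (Nat.cast : ℕ → ℚ) hodd
    push_cast at this ⊢
    linarith
  · rw [hpow]
    have := congrArg (Nat.cast : ℕ → ℚ) heven
    push_cast at this ⊢
    linarith
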